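/- arXiv:2604.15949 — 2 statements merged into one kernel-verified Lean document; each statement's English description precedes it below -/
import Mathlib

section
/- (Type 10, finitely many duplicates on the tail) Let A be a noncomputable c.e. set with the Type 10 structure: c.e. sets D₀ ⊆ D₁ ⊆ ⋯ disjoint from A generating all c.e. sets disjoint from A modulo finite, K := D₀, R := A ∪ K with Rᶜ r-cohesive. Then for every set B and every many-one reduction h : A ≤_m B, the set D_h ∩ Rᶜ is finite. -/
open Set

/-- A many-one reduction from `A` to `B`: a total computable function preserving membership. -/
def ManyOneRed (h : ℕ → ℕ) (A B : Set ℕ) : Prop :=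
  Computable h ∧ ∀ x, x ∈ A ↔ h x ∈ B

/-- Many-one equivalence of sets of naturals. -/
def MEquiv (A B : Set ℕ) : Prop :=
  (∃ h, ManyOneRed h A B) ∧ (∃ f, ManyOneRed f B A)

/-- Finite-one reducibility: a many-one reduction all of whose fibres are finite. -/
def FORed (A B : Set ℕ) : Prop :=
  ∃ g : ℕ → ℕ, Computable g ∧ (∀ x, x ∈ A ↔ g x ∈ B) ∧ ∀ y, (g ⁻¹' {y}).Finite

/-- The set of negative duplicates of a reduction `h` with respect to `A`. -/
def Dh (A : Set ℕ) (h : ℕ → ℕ) : Set ℕ :=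
  {x | x ∉ A ∧ ∃ y < x, y ∉ A ∧ h y = h x}


section Aux

open Computable

theorem REPred.or' {p q : ℕ → Prop} (hp : REPred p) (hq : REPred q) :
    REPred fun x => p x ∨ q x := by
  obtain ⟨k, hk, H⟩ := Partrec.merge' hp hq
  refine hk.dom_re.of_eq fun x => ?_
  rw [(H x).2]
  simp [Part.assert]

theorem REPred.and' {α : Type*} [Primcodable α] {p q : α → Prop} (hp : REPred p)
    (hq : ComputablePred q) : REPred fun x => p x ∧ q x := by
  obtain ⟨f, hf, rfl⟩ := ComputablePred.computable_iff.1 hq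
  have hg : Partrec fun x : α =>
      bif f x then Part.assert (p x) fun _ => Part.some () else Part.none :=
    Partrec.cond hf hp Partrec.none
  refine hg.dom_re.of_eq fun x => ?_
  cases hfx : f x <;> simp [hfx, Part.assert]

theorem re_exists {p : ℕ × ℕ → Prop} (hp : REPred p) : REPred fun x => ∃ d, p (x, d) := by
  have h1 : Partrec fun n : ℕ =>
      (Part.assert (p n.unpair) fun _ => Part.some ()).map fun _ => 0 :=
    (hp.comp Computable.unpair).map ((Computable.const 0).comp Computable.fst).to₂
  obtain ⟨c, hc⟩ := Nat.Partrec.Code.exists_code.1 (Partrec.nat_iff.1 h1)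
  have hdom : ∀ n : ℕ, (Nat.Partrec.Code.eval c n).Dom ↔ p n.unpair := by
    intro n
    rw [hc]
    simp [Part.assert]
  have hg : Partrec fun x : ℕ =>
      Nat.rfindOpt fun m => Nat.Partrec.Code.evaln m.unpair.1 c (Nat.pair x m.unpair.2) := by
    apply Partrec.rfindOpt
    exact Nat.Partrec.Code.primrec_evaln.to_comp.comp
      (((Computable.fst.comp (Computable.unpair.comp Computable.snd)).pair
        (Computable.const c)).pair
        (Primrec₂.natPair.to_comp.comp Computable.fst
          (Computable.snd.comp (Computable.unpair.comp Computable.snd))))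
  refine hg.dom_re.of_eq fun x => ?_
  rw [Nat.rfindOpt_dom]
  constructor
  · rintro ⟨m, a, ha⟩
    refine ⟨m.unpair.2, ?_⟩
    have hmem : a ∈ Nat.Partrec.Code.eval c (Nat.pair x m.unpair.2) :=
      Nat.Partrec.Code.evaln_sound ha
    have := (hdom (Nat.pair x m.unpair.2)).1 (Part.dom_iff_mem.2 ⟨a, hmem⟩)
    simpa using this
  · rintro ⟨d, hd⟩
    have : (Nat.Partrec.Code.eval c (Nat.pair x d)).Dom :=
      (hdom (Nat.pair x d)).2 (by simpa using hd)
    obtain ⟨a, ha⟩ := Part.dom_iff_mem.1 this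
    obtain ⟨k, hk⟩ := Nat.Partrec.Code.evaln_complete.1 ha
    exact ⟨Nat.pair k d, a, by simpa using hk⟩

theorem computablePred_mem_list (l : List ℕ) : ComputablePred fun x => x ∈ l := by
  induction l with
  | nil => exact ComputablePred.computable_iff.2 ⟨fun _ => false, Computable.const _, by simp⟩
  | cons a l ih =>
    obtain ⟨f, hf, hfe⟩ := ComputablePred.computable_iff.1 ih
    refine ComputablePred.computable_iff.2 ⟨fun x => bif decide (x = a) then true else f x, ?_, ?_⟩
    · exact Computable.cond (Primrec.eq.decide.to_comp.comp Computable.id (Computable.const a))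
        (Computable.const true) hf
    · funext x
      have := congrFun hfe x
      simp only [List.mem_cons]
      cases hxa : decide (x = a) <;> simp_all

theorem computablePred_of_finite {P : Set ℕ} (hP : P.Finite) : ComputablePred (· ∈ P) := by
  classical
  refine (computablePred_mem_list hP.toFinset.toList).of_eq fun x => ?_
  simp [Set.Finite.mem_toFinset]

theorem compPred_dup {h : ℕ → ℕ} (hh : Computable h) :
    ComputablePred fun x => ∃ y, y < x ∧ h y = h x := by
  classical
  have key : ∀ x n : ℕ,
      (Nat.rec (motive := fun _ => Bool) false
        (fun y IH => bif IH then true else decide (h y = h x)) n = true) ↔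
      ∃ y, y < n ∧ h y = h x := by
    intro x n
    induction n with
    | zero => simp
    | succ n ih =>
      cases hb : (Nat.rec (motive := fun _ => Bool) false
          (fun y IH => bif IH then true else decide (h y = h x)) n) <;>
        rw [hb] at ih <;> simp only [hb] <;> constructor
      · intro hd
        simp only [Bool.cond_false, decide_eq_true_eq] at hd
        exact ⟨n, Nat.lt_succ_self n, hd⟩
      · rintro ⟨y, hy, hyx⟩
        rcases Nat.lt_succ_iff_lt_or_eq.1 hy with hy' | rfl
        · exact absurd (ih.2 ⟨y, hy', hyx⟩) (by simp)
        · simpa using hyx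
      · intro _
        obtain ⟨y, hy, hyx⟩ := ih.1 rfl
        exact ⟨y, hy.trans (Nat.lt_succ_self n), hyx⟩
      · intro _; rfl
  refine ComputablePred.computable_iff.2 ⟨fun x => Nat.rec (motive := fun _ => Bool) false
      (fun y IH => bif IH then true else decide (h y = h x)) x, ?_, ?_⟩
  · have : Computable fun q : ℕ × (ℕ × Bool) =>
        bif q.2.2 then true else decide (h q.2.1 = h q.1) :=
      Computable.cond (Computable.snd.comp Computable.snd) (Computable.const true)
        (Primrec.eq.decide.to_comp.comp (hh.comp (Computable.fst.comp Computable.snd))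
          (hh.comp Computable.fst))
    exact (Computable.nat_rec Computable.id (Computable.const false) this.to₂).of_eq
      fun x => rfl
  · funext x
    exact propext (key x x).symm

end Aux

/-- Type 10: finitely many duplicates on the tail. -/
theorem type10_duplicates_finite (A : Set ℕ)
    (hAce : REPred (· ∈ A)) (hAnc : ¬ComputablePred (· ∈ A))
    (D : ℕ → Set ℕ) (hDce : ∀ i, REPred (· ∈ D i))
    (hDmono : ∀ i, D i ⊆ D (i + 1)) (hDdisj : ∀ i, Disjoint (D i) A)
    (hgen : ∀ C : Set ℕ, REPred (· ∈ C) → Disjoint C A → ∃ j, (C \ D j).Finite)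
    (hrcoh : ∀ S : Set ℕ, ComputablePred (· ∈ S) →
      ((A ∪ D 0)ᶜ ∩ S).Finite ∨ ((A ∪ D 0)ᶜ \ S).Finite) :
    ∀ (B : Set ℕ) (h : ℕ → ℕ), ManyOneRed h A B →
      (Dh A h ∩ (A ∪ D 0)ᶜ).Finite := by
  classical
  intro B h hred
  obtain ⟨hhc, hhm⟩ := hred
  -- Key lemma: a c.e. set W of non-elements of A covering cofinitely much of (A ∪ D 0)ᶜ
  -- makes A computable, contradiction.
  have key : ∀ W : Set ℕ, REPred (· ∈ W) → (∀ x ∈ W, x ∉ A) →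
      ((A ∪ D 0)ᶜ \ W).Finite → False := by
    intro W hWre hWA hWfin
    have h1 : ∀ x, (x ∈ W ∨ x ∈ D 0 ∨ x ∈ ((A ∪ D 0)ᶜ \ W)) ↔ x ∉ A := by
      intro x
      constructor
      · rintro (hx | hx | hx)
        · exact hWA x hx
        · exact fun hA => Set.disjoint_left.1 (hDdisj 0) hx hA
        · exact fun hA => hx.1 (Set.mem_union_left _ hA)
      · intro hx
        by_cases hW : x ∈ W
        · exact Or.inl hW
        by_cases hD : x ∈ D 0
        · exact Or.inr (Or.inl hD)
        refine Or.inr (Or.inr ⟨?_, hW⟩)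
        intro hc
        rcases hc with hc | hc
        · exact hx hc
        · exact hD hc
    have hre : REPred fun x => x ∉ A :=
      (hWre.or' ((hDce 0).or' (computablePred_of_finite hWfin).to_re)).of_eq h1
    exact hAnc (ComputablePred.computable_iff_re_compl_re'.2 ⟨hAce, hre⟩)
  rcases hrcoh {x | ∃ y, y < x ∧ h y = h x} (compPred_dup hhc) with hfin | hfin
  · refine hfin.subset ?_
    rintro x ⟨⟨hxA, y, hy, hyA, hxy⟩, hxR⟩
    exact ⟨hxR, y, hy, hxy⟩
  · exfalso
    -- fibres over tail-minimal points are finite on (A ∪ D 0)ᶜ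
    have hfib : ∀ t, t ∉ A → ((A ∪ D 0)ᶜ ∩ {x | h x = h t}).Finite := by
      intro t htA
      have hFt : ComputablePred (· ∈ {x | h x = h t}) :=
        ComputablePred.computable_iff.2 ⟨fun x => decide (h x = h t),
          Primrec.eq.decide.to_comp.comp hhc (Computable.const (h t)),
          funext fun x => by simp [Set.mem_setOf_eq]⟩
      rcases hrcoh _ hFt with h1 | h1
      · exact h1
      · exact absurd h1 fun h1 => key _ hFt.to_re
          (fun x hx hA => htA ((hhm t).2 (hx ▸ (hhm x).1 hA))) h1
    -- the c.e. set C = h⁻¹(h(D 0))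
    have hCre : REPred (· ∈ {x | ∃ d, d ∈ D 0 ∧ h d = h x}) := by
      refine (re_exists (p := fun xy : ℕ × ℕ => xy.2 ∈ D 0 ∧ h xy.2 = h xy.1) ?_).of_eq
        fun x => Iff.rfl
      refine REPred.and'
        (show REPred fun xy : ℕ × ℕ => xy.2 ∈ D 0 from (hDce 0).comp Computable.snd) ?_
      exact ComputablePred.computable_iff.2 ⟨fun xy => decide (h xy.2 = h xy.1),
        Primrec.eq.decide.to_comp.comp (hhc.comp Computable.snd) (hhc.comp Computable.fst),
        funext fun xy => by simp⟩
    have hCA : ∀ x ∈ {x | ∃ d, d ∈ D 0 ∧ h d = h x}, x ∉ A := by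
      rintro x ⟨d, hd, he⟩ hA
      exact Set.disjoint_left.1 (hDdisj 0) hd ((hhm d).2 (he ▸ (hhm x).1 hA))
    -- cover the rest of (A ∪ D 0)ᶜ by finitely many fibres
    have hcover : ((A ∪ D 0)ᶜ \ {x | ∃ d, d ∈ D 0 ∧ h d = h x}) ⊆
        ⋃ t ∈ ((A ∪ D 0)ᶜ \ {x | ∃ y, y < x ∧ h y = h x}),
          ((A ∪ D 0)ᶜ ∩ {x | h x = h t}) := by
      rintro x ⟨hxR, hxC⟩
      have hex : ∃ y, y ∉ A ∧ h y = h x :=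
        ⟨x, fun hA => hxR (Set.mem_union_left _ hA), rfl⟩
      obtain ⟨hmA, hmhx⟩ := Nat.find_spec hex
      set m := Nat.find hex with hm
      have hmD : m ∉ D 0 := fun hmD => hxC ⟨m, hmD, hmhx⟩
      have hmR : m ∈ (A ∪ D 0)ᶜ := by
        intro hc
        rcases hc with hc | hc
        · exact hmA hc
        · exact hmD hc
      have hmS : m ∉ {z | ∃ y, y < z ∧ h y = h z} := by
        rintro ⟨y, hym, hyh⟩
        have hyA : y ∉ A := fun hA => hmA ((hhm m).2 (hyh ▸ (hhm y).1 hA))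
        exact Nat.find_min hex hym ⟨hyA, hyh.trans hmhx⟩
      exact Set.mem_biUnion (Set.mem_diff_of_mem hmR hmS) ⟨hxR, hmhx.symm⟩
    have hfinCc : ((A ∪ D 0)ᶜ \ {x | ∃ d, d ∈ D 0 ∧ h d = h x}).Finite :=
      Set.Finite.subset (hfin.biUnion fun t ht =>
        hfib t fun hA => ht.1 (Set.mem_union_left _ hA)) hcover
    exact key _ hCre hCA hfinCc
end

section
/- (Type 10 backward reserve) Let A be a noncomputable c.e. D-maximal set (superset formulation) with Aᶜ = K ⊔ Rᶜ, where K is a noncomputable c.e. set disjoint from A, R := A ∪ K, and Rᶜ is r-cohesive. Then for every c.e. set B ≡_m A and every many-one reduction f : B ≤_m A, the set f⁻¹(K) is infinite. -/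
open Set

/-! ### Auxiliary computability lemmas -/

lemma rePred_or {p q : ℕ → Prop} (hp : REPred p) (hq : REPred q) :
    REPred fun a => p a ∨ q a := by
  obtain ⟨k, hk, H⟩ := Partrec.merge' hp hq
  exact hk.dom_re.of_eq fun a => by
    rw [(H a).2]
    simp [Part.assert]

lemma rePred_comp {p : ℕ → Prop} {f : ℕ → ℕ} (hp : REPred p) (hf : Computable f) :
    REPred fun a => p (f a) :=
  Partrec.comp hp hf

lemma re_range {f : ℕ → ℕ} (hf : Computable f) : REPred (· ∈ Set.range f) := by
  have hc : Computable₂ fun (x n : ℕ) => (decide (f n = x) : Bool) :=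
    Primrec.eq.decide.to_comp.comp (hf.comp Computable.snd) Computable.fst
  have hp : Partrec fun x => Nat.rfind (fun n => Part.some (decide (f n = x)) : ℕ →. Bool) :=
    Partrec.rfind hc.partrec₂
  exact hp.dom_re.of_eq fun x => by
    simp only [Nat.rfind_dom, Part.mem_some_iff, Set.mem_range]
    constructor
    · rintro ⟨n, hn, -⟩
      exact ⟨n, by simpa using hn⟩
    · rintro ⟨n, hn⟩
      exact ⟨n, by simp [hn], fun _ _ => trivial⟩

lemma compPred_comp {p : ℕ → Prop} {f : ℕ → ℕ} (hp : ComputablePred p) (hf : Computable f) :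
    ComputablePred fun a => p (f a) := by
  obtain ⟨g, hg, rfl⟩ := ComputablePred.computable_iff.1 hp
  exact ComputablePred.computable_iff.2 ⟨fun a => g (f a), hg.comp hf, rfl⟩

lemma compPred_or {p q : ℕ → Prop} (hp : ComputablePred p) (hq : ComputablePred q) :
    ComputablePred fun a => p a ∨ q a := by
  obtain ⟨g, hg, rfl⟩ := ComputablePred.computable_iff.1 hp
  obtain ⟨k, hk, rfl⟩ := ComputablePred.computable_iff.1 hq
  exact ComputablePred.computable_iff.2 ⟨fun a => g a || k a,
    (Computable.cond hg (Computable.const true) hk).of_eq fun a => by cases g a <;> simp,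
    funext fun a => by simp [eq_iff_iff, Bool.or_eq_true]⟩

lemma compPred_and {p q : ℕ → Prop} (hp : ComputablePred p) (hq : ComputablePred q) :
    ComputablePred fun a => p a ∧ q a :=
  ((compPred_or hp.not hq.not).not).of_eq fun a => by tauto

lemma compPred_eq (a : ℕ) : ComputablePred (· = a) :=
  ComputablePred.computable_iff.2 ⟨fun x => decide (x = a),
    (Primrec.eq.comp Primrec.id (Primrec.const a)).decide.to_comp,
    funext fun x => by simp [eq_iff_iff]⟩

lemma compPred_finite {S : Set ℕ} (hS : S.Finite) : ComputablePred (· ∈ S) := by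
  refine Set.Finite.induction_on _ hS ?_ ?_
  · exact ComputablePred.computable_iff.2 ⟨fun _ => false, Computable.const false,
      funext fun x => by simp [eq_iff_iff]⟩
  · intro a s _ _ ih
    exact (compPred_or (compPred_eq a) ih).of_eq fun x => by
      simp [Set.mem_insert_iff]

/-- Type 10 backward reserve. -/
theorem type10_backward_reserve (A K : Set ℕ)
    (hAce : REPred (· ∈ A)) (hAnc : ¬ComputablePred (· ∈ A))
    (hDmax : ∀ W : Set ℕ, REPred (· ∈ W) → A ⊆ W →
      REPred (· ∈ W \ A) ∨ ∃ C : Set ℕ, ComputablePred (· ∈ C) ∧ A ⊆ C ∧ C ⊆ W)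
    (hKce : REPred (· ∈ K)) (hKnc : ¬ComputablePred (· ∈ K))
    (hKdisj : Disjoint K A)
    (hrcoh : ∀ S : Set ℕ, ComputablePred (· ∈ S) →
      ((A ∪ K)ᶜ ∩ S).Finite ∨ ((A ∪ K)ᶜ \ S).Finite) :
    ∀ B : Set ℕ, REPred (· ∈ B) → MEquiv A B → ∀ f : ℕ → ℕ, ManyOneRed f B A →
      (f ⁻¹' K).Infinite := by
  rintro B hBce ⟨⟨h, hhc, hh⟩, -⟩ f ⟨hfc, hf⟩
  have hdisj := Set.disjoint_left.1 hKdisj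
  have hWre : REPred (· ∈ A ∪ Set.range f) :=
    (rePred_or hAce (re_range hfc)).of_eq fun x => (Set.mem_union x A (Set.range f)).symm
  rcases hDmax (A ∪ Set.range f) hWre Set.subset_union_left with hre | ⟨C, hCcomp, hAC, hCW⟩
  · exfalso
    have h1 : REPred fun x => ¬ x ∈ B := by
      refine (rePred_comp hre hfc).of_eq fun x => ?_
      constructor
      · rintro ⟨-, hna⟩ hB
        exact hna ((hf x).1 hB)
      · intro hnB
        exact ⟨Or.inr ⟨x, rfl⟩, fun hA => hnB ((hf x).2 hA)⟩
    have hBcomp : ComputablePred (· ∈ B) :=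
      ComputablePred.computable_iff_re_compl_re'.2 ⟨hBce, h1⟩
    exact hAnc ((compPred_comp hBcomp hhc).of_eq fun x => (hh x).symm)
  · have hCK : (C ∩ K).Infinite := by
      by_contra hCKf
      rw [Set.not_infinite] at hCKf
      rcases hrcoh C hCcomp with hc1 | hc2
      · apply hAnc
        have hF : ((C ∩ K) ∪ ((A ∪ K)ᶜ ∩ C)).Finite := hCKf.union hc1
        refine (compPred_and hCcomp (compPred_finite hF).not).of_eq fun x => ?_
        constructor
        · rintro ⟨hxC, hxF⟩
          by_contra hxA
          rcases Classical.em (x ∈ K) with hxK | hxK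
          · exact hxF (Or.inl ⟨hxC, hxK⟩)
          · exact hxF (Or.inr ⟨fun hx => hx.elim hxA hxK, hxC⟩)
        · intro hxA
          exact ⟨hAC hxA, fun hxF => hxF.elim (fun hx => hdisj hx.2 hxA)
            (fun hx => hx.1 (Or.inl hxA))⟩
      · apply hKnc
        refine (compPred_and (compPred_or hCcomp.not (compPred_finite hCKf))
          (compPred_finite hc2).not).of_eq fun x => ?_
        constructor
        · rintro ⟨hx1, hx2⟩
          rcases hx1 with hxC | ⟨-, hxK⟩
          · by_contra hxK
            rcases Classical.em (x ∈ A ∪ K) with hR | hR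
            · rcases hR with hA | hK
              · exact hxC (hAC hA)
              · exact hxK hK
            · exact hx2 ⟨hR, hxC⟩
          · exact hxK
        · intro hxK
          refine ⟨?_, fun hx => hx.1 (Or.inr hxK)⟩
          rcases Classical.em (x ∈ C) with hC | hC
          · exact Or.inr ⟨hC, hxK⟩
          · exact Or.inl hC
    by_contra hfin
    rw [Set.not_infinite] at hfin
    have himg : (K ∩ Set.range f).Finite := by
      rw [← Set.image_preimage_eq_inter_range]
      exact hfin.image f
    refine hCK (himg.subset fun x hx => ?_)
    rcases hx with ⟨hxC, hxK⟩
    refine ⟨hxK, ?_⟩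
    rcases hCW hxC with hA | hr
    · exact absurd hA (hdisj hxK)
    · exact hr
end
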